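/- arXiv:1902.10783 — 3 statements merged into one kernel-verified Lean document; each statement's English description precedes it below -/
import Mathlib

section
/- Let A be a 3×3 real symmetric matrix with all entries positive, with entries a11, a12, a13, a12, a22, a23, a13, a23, a33. Suppose X = diag(x1, x2, x3) is a diagonal matrix with x1, x2, x3 > 0 such that S = X A X is doubly stochastic. Set z = x1². Then the (1,1) entry of S equals a11·z, and z is a root of the quartic polynomial P(z) = C4·z⁴ + C3·z³ + C2·z² + C1·z + C0, where C4 = a11⁴a22²a33² − a11⁴a22a23²a33 − 2a11³a12²a22a33² + a11³a12²a23²a33 + 2a11³a12a13a22a23a33 − 2a11³a13²a22²a33 + a11³a13²a22a23² + a11²a12⁴a33² − 2a11²a12³a13a23a33 + 3a11²a12²a13²a22a33 − a11²a12²a13²a23² − 2a11²a12a13³a22a23 + a11²a13⁴a22² − a11a12⁴a13²a33 + 2a11a12³a13³a23 − a11a12²a13⁴a22; C3 = −4a11³a22²a33² + 4a11³a22a23²a33 + 4a11²a12²a22a33² − 3a11²a12²a23²a33 − 2a11²a12a13a22a23a33 + 4a11²a13²a22²a33 − 3a11²a13²a22a23² − 2a11a12²a13²a22a33 + 2a11a12²a13²a23²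 − a12⁴a13²a33 + 2a12³a13³a23 − a12²a13⁴a22; C2 = 6a11²a22²a33² − 6a11²a22a23²a33 − 2a11a12²a22a33² + 3a11a12²a23²a33 − 2a11a12a13a22a23a33 − 2a11a13²a22²a33 + 3a11a13²a22a23² + 2a12³a13a23a33 − 3a12²a13²a22a33 − a12²a13²a23² + 2a12a13³a22a23; C1 = −4a11a22²a33² + 4a11a22a23²a33 − a12²a23²a33 + 2a12a13a22a23a33 − a13²a22a23²; C0 = a22²a33² − a22a23²a33. -/
/-!
The row sums of `S = X A X` are three quadratic equations in `x1, x2, x3`. Row 1 expresses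
`a12 x1 x2` through `z = x1²` and `q = x1 x3`; substituting this into rows 2 and 3, multiplied
by `x1²`, leaves two quadratic equations in `q` whose coefficients are polynomials in `z`. They
have the common root `q`, so their resultant vanishes, and this resultant is exactly `a12²` times
the quartic.
-/

open Finset Matrix

section QuadResultant

variable {R : Type*} [CommRing R]

def quadResultant (f₂ f₁ f₀ g₂ g₁ g₀ : R) : R :=
  (f₂ * g₀ - f₀ * g₂) ^ 2 - (f₂ * g₁ - f₁ * g₂) * (f₁ * g₀ - f₀ * g₁)

theorem quadResultant_eq_zero_of_common_root {f₂ f₁ f₀ g₂ g₁ g₀ q : R}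
    (hf : f₂ * q ^ 2 + f₁ * q + f₀ = 0) (hg : g₂ * q ^ 2 + g₁ * q + g₀ = 0) :
    quadResultant f₂ f₁ f₀ g₂ g₁ g₀ = 0 := by
  rw [quadResultant]
  linear_combination (f₂ * g₀ - f₀ * g₂ - (f₂ * g₁ - f₁ * g₂) * q) * (f₂ * hg - g₂ * hf)
    - (f₂ * g₁ - f₁ * g₂) * (f₁ * hg - g₁ * hf)

end QuadResultant

section RowSums

variable {R : Type*} [CommRing R] {a11 a12 a13 a22 a23 a33 x1 x2 x3 : R}

theorem quadratic_x1x3_of_row_sums_12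
    (h₁ : x1 * a11 * x1 + x1 * a12 * x2 + x1 * a13 * x3 = 1)
    (h₂ : x2 * a12 * x1 + x2 * a22 * x2 + x2 * a23 * x3 = 1) :
    a13 * (a13 * a22 - a12 * a23) * (x1 * x3) ^ 2
      + (a12 * a23 * (1 - a11 * x1 ^ 2) - a13 * (2 * a22 * (1 - a11 * x1 ^ 2) + a12 ^ 2 * x1 ^ 2))
        * (x1 * x3)
      + (a22 * (1 - a11 * x1 ^ 2) ^ 2 - a11 * a12 ^ 2 * x1 ^ 4) = 0 := by
  linear_combination (a12 ^ 2 * x1 ^ 2) * h₂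
    - (a22 * (1 - a11 * x1 ^ 2 - a13 * (x1 * x3) + a12 * (x1 * x2)) + a12 ^ 2 * x1 ^ 2
      + a12 * a23 * (x1 * x3)) * h₁

theorem quadratic_x1x3_of_row_sums_13
    (h₁ : x1 * a11 * x1 + x1 * a12 * x2 + x1 * a13 * x3 = 1)
    (h₃ : x3 * a13 * x1 + x3 * a23 * x2 + x3 * a33 * x3 = 1) :
    (a12 * a33 - a13 * a23) * (x1 * x3) ^ 2
      + (a12 * a13 * x1 ^ 2 + a23 * (1 - a11 * x1 ^ 2)) * (x1 * x3) - a12 * x1 ^ 2 = 0 := by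
  linear_combination (a12 * x1 ^ 2) * h₃ - (a23 * (x1 * x3)) * h₁

end RowSums

theorem sinkhorn_generic_symmetric_3x3_general
    (a11 a12 a13 a22 a23 a33 : ℝ)
    (ha12 : 0 < a12)
    (x1 x2 x3 : ℝ)
    (A : Matrix (Fin 3) (Fin 3) ℝ)
    (hA : A = !![a11, a12, a13; a12, a22, a23; a13, a23, a33])
    (X : Matrix (Fin 3) (Fin 3) ℝ)
    (hX : X = Matrix.diagonal ![x1, x2, x3])
    (S : Matrix (Fin 3) (Fin 3) ℝ)
    (hS : S = X * A * X)
    (hrow : ∀ i, ∑ j, S i j = 1)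
    (z : ℝ) (hz : z = x1 ^ 2) :
    S 0 0 = a11 * z ∧
    (a11^4*a22^2*a33^2 - a11^4*a22*a23^2*a33 - 2*a11^3*a12^2*a22*a33^2
      + a11^3*a12^2*a23^2*a33 + 2*a11^3*a12*a13*a22*a23*a33
      - 2*a11^3*a13^2*a22^2*a33 + a11^3*a13^2*a22*a23^2
      + a11^2*a12^4*a33^2 - 2*a11^2*a12^3*a13*a23*a33
      + 3*a11^2*a12^2*a13^2*a22*a33 - a11^2*a12^2*a13^2*a23^2
      - 2*a11^2*a12*a13^3*a22*a23 + a11^2*a13^4*a22^2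
      - a11*a12^4*a13^2*a33 + 2*a11*a12^3*a13^3*a23
      - a11*a12^2*a13^4*a22) * z^4
    + (-4*a11^3*a22^2*a33^2 + 4*a11^3*a22*a23^2*a33
      + 4*a11^2*a12^2*a22*a33^2 - 3*a11^2*a12^2*a23^2*a33
      - 2*a11^2*a12*a13*a22*a23*a33 + 4*a11^2*a13^2*a22^2*a33
      - 3*a11^2*a13^2*a22*a23^2 - 2*a11*a12^2*a13^2*a22*a33
      + 2*a11*a12^2*a13^2*a23^2 - a12^4*a13^2*a33
      + 2*a12^3*a13^3*a23 - a12^2*a13^4*a22) * z^3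
    + (6*a11^2*a22^2*a33^2 - 6*a11^2*a22*a23^2*a33
      - 2*a11*a12^2*a22*a33^2 + 3*a11*a12^2*a23^2*a33
      - 2*a11*a12*a13*a22*a23*a33 - 2*a11*a13^2*a22^2*a33
      + 3*a11*a13^2*a22*a23^2 + 2*a12^3*a13*a23*a33
      - 3*a12^2*a13^2*a22*a33 - a12^2*a13^2*a23^2
      + 2*a12*a13^3*a22*a23) * z^2
    + (-4*a11*a22^2*a33^2 + 4*a11*a22*a23^2*a33 - a12^2*a23^2*a33
      + 2*a12*a13*a22*a23*a33 - a13^2*a22*a23^2) * z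
    + (a22^2*a33^2 - a22*a23^2*a33) = 0 := by
  subst hA hX hS hz
  have h₁ := by simpa [Fin.sum_univ_three] using hrow 0
  have h₂ := by simpa [Fin.sum_univ_three] using hrow 1
  have h₃ := by simpa [Fin.sum_univ_three] using hrow 2
  refine ⟨by simp; ring, ?_⟩
  have hres := quadResultant_eq_zero_of_common_root
    (quadratic_x1x3_of_row_sums_12 h₁ h₂) (quadratic_x1x3_of_row_sums_13 h₁ h₃)
  rw [quadResultant] at hres
  refine (mul_eq_zero.mp ?_).resolve_left (pow_ne_zero 2 ha12.ne')
  linear_combination hres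

theorem sinkhorn_generic_symmetric_3x3
    (a11 a12 a13 a22 a23 a33 : ℝ)
    (ha11 : 0 < a11) (ha12 : 0 < a12) (ha13 : 0 < a13)
    (ha22 : 0 < a22) (ha23 : 0 < a23) (ha33 : 0 < a33)
    (x1 x2 x3 : ℝ) (hx1 : 0 < x1) (hx2 : 0 < x2) (hx3 : 0 < x3)
    (A : Matrix (Fin 3) (Fin 3) ℝ)
    (hA : A = !![a11, a12, a13; a12, a22, a23; a13, a23, a33])
    (X : Matrix (Fin 3) (Fin 3) ℝ)
    (hX : X = Matrix.diagonal ![x1, x2, x3])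
    (S : Matrix (Fin 3) (Fin 3) ℝ)
    (hS : S = X * A * X)
    (hrow : ∀ i, ∑ j, S i j = 1)
    (hcol : ∀ j, ∑ i, S i j = 1)
    (z : ℝ) (hz : z = x1 ^ 2) :
    S 0 0 = a11 * z ∧
    (a11^4*a22^2*a33^2 - a11^4*a22*a23^2*a33 - 2*a11^3*a12^2*a22*a33^2
      + a11^3*a12^2*a23^2*a33 + 2*a11^3*a12*a13*a22*a23*a33
      - 2*a11^3*a13^2*a22^2*a33 + a11^3*a13^2*a22*a23^2
      + a11^2*a12^4*a33^2 - 2*a11^2*a12^3*a13*a23*a33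
      + 3*a11^2*a12^2*a13^2*a22*a33 - a11^2*a12^2*a13^2*a23^2
      - 2*a11^2*a12*a13^3*a22*a23 + a11^2*a13^4*a22^2
      - a11*a12^4*a13^2*a33 + 2*a11*a12^3*a13^3*a23
      - a11*a12^2*a13^4*a22) * z^4
    + (-4*a11^3*a22^2*a33^2 + 4*a11^3*a22*a23^2*a33
      + 4*a11^2*a12^2*a22*a33^2 - 3*a11^2*a12^2*a23^2*a33
      - 2*a11^2*a12*a13*a22*a23*a33 + 4*a11^2*a13^2*a22^2*a33
      - 3*a11^2*a13^2*a22*a23^2 - 2*a11*a12^2*a13^2*a22*a33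
      + 2*a11*a12^2*a13^2*a23^2 - a12^4*a13^2*a33
      + 2*a12^3*a13^3*a23 - a12^2*a13^4*a22) * z^3
    + (6*a11^2*a22^2*a33^2 - 6*a11^2*a22*a23^2*a33
      - 2*a11*a12^2*a22*a33^2 + 3*a11*a12^2*a23^2*a33
      - 2*a11*a12*a13*a22*a23*a33 - 2*a11*a13^2*a22^2*a33
      + 3*a11*a13^2*a22*a23^2 + 2*a12^3*a13*a23*a33
      - 3*a12^2*a13^2*a22*a33 - a12^2*a13^2*a23^2
      + 2*a12*a13^3*a22*a23) * z^2
    + (-4*a11*a22^2*a33^2 + 4*a11*a22*a23^2*a33 - a12^2*a23^2*a33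
      + 2*a12*a13*a22*a23*a33 - a13^2*a22*a23^2) * z
    + (a22^2*a33^2 - a22*a23^2*a33) = 0 :=
  sinkhorn_generic_symmetric_3x3_general a11 a12 a13 a22 a23 a33 ha12 x1 x2 x3 A hA X hX S hS hrow z
    hz
end

section
/- Let K and L be positive real numbers and let A be the 3×3 real matrix with rows (K, 1, 1), (1, L, 1), (1, 1, 1). Suppose X = diag(x1, x2, x3) is a diagonal matrix with x1, x2, x3 > 0 such that S = X A X is doubly stochastic. Set z = x1². Then the (1,1) entry of S equals K·z, and z satisfies the quartic equation L + (−4LK + 1)·z + (6LK² − 2LK − 3K − 1)·z² − (K − 1)(4LK² − 3K − 1)·z³ + K(K − 1)²(LK − 1)·z⁴ = 0. -/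
/-!
With `s = x1 + x2 + x3` and `w = 1 + (1 - K) z`, the row sums of `S` read `x1 s = w`, `x3 s = 1`
and `x2 (s + (L - 1) x2) = 1`. Hence `x2 s = s² - w - 1` and `s² z = (x1 s)² = w²`, so after
multiplying the last equation by `s² z²` everything is a polynomial in `z`: with
`T = (x2 s) z = w² - (w + 1) z` it becomes `T (w² + (L - 1) T) = w² z`, which is the quartic.
-/

open Finset Matrix

theorem Matrix.diagonal_mul_mul_diagonal_apply {n R : Type*} [Fintype n] [DecidableEq n]
    [NonUnitalNonAssocSemiring R] (x : n → R) (A : Matrix n n R) (i j : n) :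
    (diagonal x * A * diagonal x) i j = x i * A i j * x j := by
  rw [mul_diagonal, diagonal_mul]

theorem Matrix.sum_diagonal_mul_mul_diagonal_apply {n R : Type*} [Fintype n] [DecidableEq n]
    [CommSemiring R] (x : n → R) (A : Matrix n n R) (i : n) :
    ∑ j, (diagonal x * A * diagonal x) i j = x i * (A *ᵥ x) i := by
  simp only [diagonal_mul_mul_diagonal_apply, mulVec, dotProduct, mul_sum, mul_assoc]

theorem sinkhorn_quartic_of_row_sums {K L x1 x2 x3 z : ℝ} (hz : z = x1 ^ 2)
    (h1 : x1 * (K * x1 + x2 + x3) = 1) (h2 : x2 * (x1 + L * x2 + x3) = 1)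
    (h3 : x3 * (x1 + x2 + x3) = 1) :
    L + (-4*L*K + 1) * z + (6*L*K^2 - 2*L*K - 3*K - 1) * z^2
      - (K - 1) * (4*L*K^2 - 3*K - 1) * z^3
      + K * (K - 1)^2 * (L*K - 1) * z^4 = 0 := by
  set s := x1 + x2 + x3
  set w := 1 + (1 - K) * z
  have hx1s : x1 * s = w := by linear_combination h1 + (K - 1) * hz
  have hs2 : s ^ 2 * z = w ^ 2 := by rw [hz, ← hx1s]; ring
  have hT : x2 * s * z = w ^ 2 - (w + 1) * z := by linear_combination hs2 - z * hx1s - z * h3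
  have h2' : (x2 * s * z) * (s ^ 2 * z + (L - 1) * (x2 * s * z)) = (s ^ 2 * z) * z := by
    linear_combination (s * z) ^ 2 * h2
  rw [hT, hs2] at h2'
  linear_combination h2'

theorem sinkhorn_KL_matrix_general
    (K L : ℝ)
    (x1 x2 x3 : ℝ)
    (A : Matrix (Fin 3) (Fin 3) ℝ)
    (hA : A = !![K, 1, 1; 1, L, 1; 1, 1, 1])
    (X : Matrix (Fin 3) (Fin 3) ℝ)
    (hX : X = Matrix.diagonal ![x1, x2, x3])
    (S : Matrix (Fin 3) (Fin 3) ℝ)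
    (hS : S = X * A * X)
    (hrow : ∀ i, ∑ j, S i j = 1)
    (z : ℝ) (hz : z = x1 ^ 2) :
    S 0 0 = K * z ∧
    L + (-4*L*K + 1) * z + (6*L*K^2 - 2*L*K - 3*K - 1) * z^2
      - (K - 1) * (4*L*K^2 - 3*K - 1) * z^3
      + K * (K - 1)^2 * (L*K - 1) * z^4 = 0 := by
  subst hA hX hS
  simp only [sum_diagonal_mul_mul_diagonal_apply] at hrow
  have h1 : x1 * (K * x1 + x2 + x3) = 1 := by
    simpa [mulVec, dotProduct, Fin.sum_univ_three] using hrow 0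
  have h2 : x2 * (x1 + L * x2 + x3) = 1 := by
    simpa [mulVec, dotProduct, Fin.sum_univ_three] using hrow 1
  have h3 : x3 * (x1 + x2 + x3) = 1 := by
    simpa [mulVec, dotProduct, Fin.sum_univ_three] using hrow 2
  refine ⟨?_, sinkhorn_quartic_of_row_sums hz h1 h2 h3⟩
  rw [diagonal_mul_mul_diagonal_apply, hz]
  simp
  ring

theorem sinkhorn_KL_matrix
    (K L : ℝ) (hK : 0 < K) (hL : 0 < L)
    (x1 x2 x3 : ℝ) (hx1 : 0 < x1) (hx2 : 0 < x2) (hx3 : 0 < x3)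
    (A : Matrix (Fin 3) (Fin 3) ℝ)
    (hA : A = !![K, 1, 1; 1, L, 1; 1, 1, 1])
    (X : Matrix (Fin 3) (Fin 3) ℝ)
    (hX : X = Matrix.diagonal ![x1, x2, x3])
    (S : Matrix (Fin 3) (Fin 3) ℝ)
    (hS : S = X * A * X)
    (hrow : ∀ i, ∑ j, S i j = 1)
    (hcol : ∀ j, ∑ i, S i j = 1)
    (z : ℝ) (hz : z = x1 ^ 2) :
    S 0 0 = K * z ∧
    L + (-4*L*K + 1) * z + (6*L*K^2 - 2*L*K - 3*K - 1) * z^2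
      - (K - 1) * (4*L*K^2 - 3*K - 1) * z^3
      + K * (K - 1)^2 * (L*K - 1) * z^4 = 0 :=
  sinkhorn_KL_matrix_general K L x1 x2 x3 A hA X hX S hS hrow z hz
end

section
/- Let r be a positive real number. Let A(r) be the 3×3 real matrix whose (1,1) entry is r(r+1)/2 and all of whose other entries are 1, and let X(r) = √(2/((r+1)(r+2))) · diag(1, (r+1)/2, (r+1)/2). Then X(r) A(r) X(r) equals the matrix S(r) with rows (r/(r+2), 1/(r+2), 1/(r+2)), (1/(r+2), (r+1)/(2(r+2)), (r+1)/(2(r+2))), (1/(r+2), (r+1)/(2(r+2)), (r+1)/(2(r+2))), and S(r) is a symmetric doubly stochastic matrix. -/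
open Finset Matrix

theorem Matrix.IsSymm.sum_apply_left {n R : Type*} [Fintype n] [AddCommMonoid R]
    {S : Matrix n n R} (hS : S.IsSymm) (j : n) : ∑ i, S i j = ∑ i, S j i :=
  Finset.sum_congr rfl fun i _ => hS.apply j i

theorem Matrix.smul_diagonal_mul_mul_smul_diagonal {n R : Type*} [Fintype n] [DecidableEq n]
    [CommRing R] (c : R) (d : n → R) (A : Matrix n n R) :
    c • diagonal d * A * c • diagonal d = (c * c) • of fun i j => d i * A i j * d j := by
  ext i j
  simp only [Matrix.smul_mul, Matrix.mul_smul, diagonal_mul, mul_diagonal, Matrix.smul_apply, of_apply,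
    smul_eq_mul]
  ring

theorem sinkhorn_limit_of_special_matrix
    (r : ℝ) (hr : 0 < r)
    (A : Matrix (Fin 3) (Fin 3) ℝ)
    (hA : A = !![r*(r+1)/2, 1, 1; 1, 1, 1; 1, 1, 1])
    (X : Matrix (Fin 3) (Fin 3) ℝ)
    (hX : X = Real.sqrt (2 / ((r+1)*(r+2))) •
            Matrix.diagonal ![1, (r+1)/2, (r+1)/2])
    (S : Matrix (Fin 3) (Fin 3) ℝ)
    (hS : S = !![r/(r+2), 1/(r+2), 1/(r+2);
                 1/(r+2), (r+1)/(2*(r+2)), (r+1)/(2*(r+2));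
                 1/(r+2), (r+1)/(2*(r+2)), (r+1)/(2*(r+2))]) :
    X * A * X = S ∧
    S.IsSymm ∧
    (∀ i, ∑ j, S i j = 1) ∧
    (∀ j, ∑ i, S i j = 1) := by
  have hr1 : r + 1 ≠ 0 := by positivity
  have hr2 : r + 2 ≠ 0 := by positivity
  have hXAX : X * A * X = S := by
    rw [hX, smul_diagonal_mul_mul_smul_diagonal, Real.mul_self_sqrt (by positivity), hA, hS]
    ext i j
    fin_cases i <;> fin_cases j <;> simp [field]
  have hsymm : S.IsSymm := by
    subst hS
    refine IsSymm.ext fun i j => ?_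
    fin_cases i <;> fin_cases j <;> rfl
  have hrow : ∀ i, ∑ j, S i j = 1 := by
    subst hS
    intro i
    fin_cases i <;> simp [Fin.sum_univ_three, field] <;> ring
  exact ⟨hXAX, hsymm, hrow, fun j => hsymm.sum_apply_left j ▸ hrow j⟩
end
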